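/- arXiv:1703.06069 — 8 statements merged into one kernel-verified Lean document; each statement's English description precedes it below -/
import Mathlib

section
/- For α > 2, λ > 0, and h > 0, the expected pathloss from the i-th closest point of a homogeneous PPP of density λ on ℝ² to the origin, with pathloss (r² + h²)^(-α/2) and distance pdf f_i(r) = e^(-πλr²)·2(πλr²)^i/(r·Γ(i)), satisfies ∫_0^∞ (r² + h²)^(-α/2)·f_i(r) dr = (πλ)^i·h^(2i-α)·U(i, i+1-α/2, πλh²), where U is Tricomi's confluent hypergeometric function. -/
open Real MeasureTheory Set

/-- Tricomi's confluent hypergeometric function, via its integral representation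
`U(a,b,z) = (1/Γ(a)) ∫₀^∞ e^{-z t} t^{a-1} (1+t)^{b-a-1} dt`. -/
noncomputable def tricomiU (a b z : ℝ) : ℝ :=
  (1 / Real.Gamma a) * ∫ t in Ioi (0 : ℝ), Real.exp (-(z * t)) * t ^ (a - 1) * (1 + t) ^ (b - a - 1)

theorem expected_pathloss_ith_nearest (α lam h : ℝ) (i : ℕ)
    (hα : 2 < α) (hlam : 0 < lam) (hh : 0 < h) (hi : 1 ≤ i) :
    (∫ r in Ioi (0 : ℝ),
        (r ^ 2 + h ^ 2) ^ (-(α / 2)) *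
          (Real.exp (-(π * lam * r ^ 2)) * (2 * (π * lam * r ^ 2) ^ i) / (r * Real.Gamma i)))
      = (π * lam) ^ i * h ^ ((2 * i : ℝ) - α) *
          tricomiU i ((i : ℝ) + 1 - α / 2) (π * lam * h ^ 2) := by
  have hc : 0 < π * lam := by positivity
  have hΓ : 0 < Real.Gamma i :=
    Real.Gamma_pos_of_pos (by exact_mod_cast Nat.lt_of_lt_of_le Nat.zero_lt_one hi)
  have hh2 : (0:ℝ) < h ^ 2 := by positivity
  set f : ℝ → ℝ := fun u => Real.exp (-(π * lam * u)) * u ^ (i - 1) * (u + h ^ 2) ^ (-(α / 2))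
    with hf
  -- Step 1: rewrite LHS integrand in the form needed for rpow substitution
  have step1 : (∫ r in Ioi (0 : ℝ),
        (r ^ 2 + h ^ 2) ^ (-(α / 2)) *
          (Real.exp (-(π * lam * r ^ 2)) * (2 * (π * lam * r ^ 2) ^ i) / (r * Real.Gamma i)))
      = ((π * lam) ^ i / Real.Gamma i) *
          ∫ r in Ioi (0:ℝ), (|(2:ℝ)| * r ^ ((2:ℝ) - 1)) • f (r ^ (2:ℝ)) := by
    rw [← integral_const_mul _ _]
    apply setIntegral_congr_fun measurableSet_Ioi
    intro r hr
    have hr0 : (0:ℝ) < r := hr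
    have h2 : r ^ (2:ℝ) = r ^ 2 := by
      rw [show (2:ℝ) = ((2:ℕ):ℝ) by norm_num, rpow_natCast]
    have h1 : r ^ ((2:ℝ) - 1) = r := by
      norm_num
    have hsplit : (π * lam * r ^ 2) ^ i = (π * lam) ^ i * ((r ^ 2) ^ (i - 1) * r ^ 2) := by
      rw [mul_pow, pow_sub_one_mul (by omega) (r ^ 2)]
    simp only [hf, smul_eq_mul, h2, h1, hsplit]
    field_simp
    ring
  rw [step1, integral_comp_rpow_Ioi f (two_ne_zero)]
  -- Step 2: scaling substitution u = h^2 * t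
  have step2 : (∫ u in Ioi (0:ℝ), f u) = (h ^ 2) • ∫ t in Ioi (0:ℝ), f (h ^ 2 * t) := by
    rw [integral_comp_mul_left_Ioi f 0 hh2, mul_zero, smul_smul,
      mul_inv_cancel₀ hh2.ne', one_smul]
  rw [step2]
  -- Step 3: pointwise identity for the scaled integrand
  have step3 : (∫ t in Ioi (0:ℝ), f (h ^ 2 * t))
      = ∫ t in Ioi (0:ℝ), (h ^ ((2 * i : ℝ) - α) / h ^ 2) *
          (Real.exp (-(π * lam * h ^ 2 * t)) * t ^ ((i:ℝ) - 1) *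
            (1 + t) ^ (((i:ℝ) + 1 - α / 2) - (i:ℝ) - 1)) := by
    apply setIntegral_congr_fun measurableSet_Ioi
    intro t ht
    have ht0 : (0:ℝ) < t := ht
    have hexp : ((i:ℝ) + 1 - α / 2) - (i:ℝ) - 1 = -(α / 2) := by ring
    have hti : t ^ ((i:ℝ) - 1) = t ^ (i - 1) := by
      rw [show (i:ℝ) - 1 = ((i - 1 : ℕ) : ℝ) by push_cast [Nat.cast_sub hi]; ring,
        rpow_natCast]
    have hmul : (h ^ 2 * t + h ^ 2) ^ (-(α / 2))
        = (h ^ 2) ^ (-(α / 2)) * (1 + t) ^ (-(α / 2)) := by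
      rw [show h ^ 2 * t + h ^ 2 = h ^ 2 * (1 + t) by ring,
        Real.mul_rpow hh2.le (by linarith)]
    have hpow : (h ^ 2 : ℝ) ^ (i - 1) * (h ^ 2) ^ (-(α / 2))
        = h ^ ((2 * i : ℝ) - α) / h ^ 2 := by
      rw [← rpow_natCast (h ^ 2) (i - 1), ← rpow_natCast h 2, ← rpow_mul hh.le,
        ← rpow_mul hh.le, ← rpow_add hh, eq_div_iff (by positivity),
        ← rpow_add hh]
      congr 1
      push_cast [Nat.cast_sub hi]
      ring
    simp only [hf, hexp, hti, mul_pow, hmul]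
    rw [← hpow]
    ring_nf
  rw [step3, integral_const_mul _ _]
  -- Step 4: assemble constants
  rw [tricomiU]
  simp only [smul_eq_mul]
  have hK : h ^ ((2 * i : ℝ) - α) ≠ 0 := by positivity
  field_simp
end

section
/- For α > 2, λ > 0, and h > 0, the expected pathloss from the nearest point of a homogeneous PPP of density λ on ℝ² to the origin, with pathloss (r² + h²)^(-α/2) and nearest-distance pdf f_1(r) = 2πλr·e^(-πλr²), equals πλ·h^(2-α)·e^(πλh²)·E_{α/2}(πλh²), where E_n(z) = ∫_1^∞ e^(-zt)·t^(-n) dt is the generalized exponential integral. -/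
open Real MeasureTheory Set

/-- Generalized exponential integral `E_n(z) = ∫₁^∞ e^{-z t} t^{-n} dt`. -/
noncomputable def expIntE (n z : ℝ) : ℝ :=
  ∫ t in Ioi (1 : ℝ), Real.exp (-(z * t)) * t ^ (-n)

/-!
Substituting `u = r²` turns the left-hand side into `πλ ∫₀^∞ (u + h²)^(-α/2) e^(-πλu) du`, and
substituting `u = h² (t - 1)` turns this into `πλ h² (h²)^(-α/2) e^(πλh²) ∫₁^∞ t^(-α/2) e^(-πλh² t) dt`.
-/

section ChangeOfVariables

variable {E : Type*} [NormedAddCommGroup E] [NormedSpace ℝ E]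

theorem integral_Ioi_comp_sub_const (g : ℝ → E) (a c : ℝ) :
    ∫ x in Ioi (a + c), g (x - c) = ∫ x in Ioi a, g x := by
  rw [← preimage_sub_const_Ioi]
  exact (measurePreserving_sub_right volume c).setIntegral_preimage_emb
    (measurableEmbedding_subRight c) g _

theorem integral_Ioi_comp_sq (g : ℝ → E) :
    ∫ x in Ioi 0, (2 * x) • g (x ^ 2) = ∫ y in Ioi 0, g y := by
  simpa [show (2 : ℝ) - 1 = 1 by norm_num] using integral_comp_rpow_Ioi_of_pos (g := g) two_pos

end ChangeOfVariables

theorem integral_Ioi_rpow_add_mul_exp_eq_expIntE (n μ : ℝ) {s : ℝ} (hs : 0 < s) :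
    ∫ u in Ioi 0, (u + s) ^ (-n) * exp (-(μ * u))
      = s ^ (1 - n) * exp (μ * s) * expIntE n (μ * s) := by
  have hshift := integral_Ioi_comp_sub_const
    (fun u ↦ (u + s) ^ (-n) * exp (-(μ * u))) 0 s
  have hscale := integral_comp_mul_left_Ioi'
    (fun v ↦ v ^ (-n) * exp (-(μ * (v - s)))) 1 hs
  simp only [sub_add_cancel, zero_add, mul_one, smul_eq_mul] at hshift hscale
  rw [← hshift, ← hscale, expIntE, ← integral_const_mul, ← integral_const_mul]
  refine setIntegral_congr_fun measurableSet_Ioi fun t ht ↦ ?_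
  have ht₀ : 0 < t := zero_lt_one.trans (mem_Ioi.mp ht)
  rw [mul_rpow hs.le ht₀.le, rpow_sub hs, rpow_one, rpow_neg hs.le,
    show -(μ * (s * t - s)) = -(μ * s * t) + μ * s by ring, exp_add]
  field_simp

theorem expected_pathloss_nearest_general (α lam h : ℝ)
    (hh : 0 < h) :
    (∫ r in Ioi (0 : ℝ),
        (r ^ 2 + h ^ 2) ^ (-(α / 2)) * (2 * π * lam * r * Real.exp (-(π * lam * r ^ 2))))
      = π * lam * h ^ ((2 : ℝ) - α) * Real.exp (π * lam * h ^ 2) *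
          expIntE (α / 2) (π * lam * h ^ 2) := by
  have hsq : ∀ r : ℝ, (r ^ 2 + h ^ 2) ^ (-(α / 2)) * (2 * π * lam * r * exp (-(π * lam * r ^ 2)))
      = (2 * r) • (π * lam * ((r ^ 2 + h ^ 2) ^ (-(α / 2)) * exp (-(π * lam * r ^ 2)))) := by
    intro r; rw [smul_eq_mul]; ring
  have hpow : (h ^ 2) ^ (1 - α / 2) = h ^ ((2 : ℝ) - α) := by
    rw [← rpow_natCast, ← rpow_mul hh.le]; norm_num; ring_nf
  simp_rw [hsq,
    integral_Ioi_comp_sq fun u ↦ π * lam * ((u + h ^ 2) ^ (-(α / 2)) * exp (-(π * lam * u))),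
    integral_const_mul, integral_Ioi_rpow_add_mul_exp_eq_expIntE _ _ (pow_pos hh 2), hpow, mul_assoc]

theorem expected_pathloss_nearest (α lam h : ℝ)
    (hα : 2 < α) (hlam : 0 < lam) (hh : 0 < h) :
    (∫ r in Ioi (0 : ℝ),
        (r ^ 2 + h ^ 2) ^ (-(α / 2)) * (2 * π * lam * r * Real.exp (-(π * lam * r ^ 2))))
      = π * lam * h ^ ((2 : ℝ) - α) * Real.exp (π * lam * h ^ 2) *
          expIntE (α / 2) (π * lam * h ^ 2) :=
  expected_pathloss_nearest_general α lam h hh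
end

section
/- For α > 2, θ > 0, r > 0, and h ≥ 0, the integral ∫_r^∞ (1 - 1/(1 + θ·((t²+h²)/(r²+h²))^(-α/2)))·t dt equals (1/2)·(r² + h²)·ψ(θ), where ψ(z) = (2z/(α-2))·₂F₁(1, 1 - 2/α, 2 - 2/α, -z). -/
open Real MeasureTheory Set

/-- Gauss hypergeometric function `₂F₁(a,b;c;z)` via Euler's integral representation. -/
noncomputable def hyp2F1 (a b c z : ℝ) : ℝ :=
  (Real.Gamma c / (Real.Gamma b * Real.Gamma (c - b))) *
    ∫ t in Ioo (0 : ℝ) 1, t ^ (b - 1) * (1 - t) ^ (c - b - 1) * (1 - z * t) ^ (-a)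

noncomputable def psi (α z : ℝ) : ℝ :=
  (2 * z / (α - 2)) * hyp2F1 1 (1 - 2 / α) (2 - 2 / α) (-z)

/-!
The substitutions `u = (t² + h²) / (r² + h²)` and then `u = s ^ (-2/α)` carry `(r, ∞)` onto
`(0, 1)` and turn the integral into `(r² + h²) θ / α · ∫₀¹ s ^ (-2/α) / (1 + θ s) ds`. With
`b = 1 - 2/α` the hypergeometric function in `ψ` is `₂F₁(1, b; b + 1; -θ)`, whose Euler integral
is, by `Γ(b + 1) = b Γ(b)`, just `b` times this last integral.
-/

open Filter

theorem integral_Ioi_comp_sq_add_div_mul_self (G : ℝ → ℝ) {r c A : ℝ} (hr : 0 ≤ r)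
    (hA : 0 < A) :
    ∫ t in Ioi r, G ((t ^ 2 + c) / A) * t = A / 2 * ∫ u in Ioi ((r ^ 2 + c) / A), G u := by
  set f : ℝ → ℝ := fun t => (t ^ 2 + c) / A
  have hmono : StrictMonoOn f (Ici r) := fun x hx y hy hxy => by
    have : x ^ 2 < y ^ 2 := pow_lt_pow_left₀ hxy (hr.trans hx) two_ne_zero
    exact div_lt_div_of_pos_right (by linarith) hA
  have himage : f '' Ioi r = Ioi (f r) :=
    (by fun_prop : Continuous f).continuousOn.image_Ioi_of_strictMonoOn hmono
      ((tendsto_atTop_add_const_right _ c (tendsto_pow_atTop two_ne_zero)).atTop_div_const hA)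
  have hderiv : ∀ t ∈ Ioi r, HasDerivWithinAt f (2 * t / A) (Ioi r) t := fun t _ => by
    simpa using (((hasDerivAt_pow 2 t).add_const c).div_const A).hasDerivWithinAt
  rw [show (r ^ 2 + c) / A = f r from rfl, ← himage,
    integral_image_eq_integral_abs_deriv_smul measurableSet_Ioi hderiv
      (hmono.injOn.mono Ioi_subset_Ici_self), ← integral_const_mul]
  refine setIntegral_congr_fun measurableSet_Ioi fun t ht => ?_
  have ht0 : 0 < t := hr.trans_lt ht
  rw [smul_eq_mul, abs_of_pos (by positivity)]
  simp only [f]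
  field_simp

theorem integral_Ioi_one_eq_integral_Ioo_rpow_neg (G : ℝ → ℝ) {p : ℝ} (hp : 0 < p) :
    ∫ u in Ioi 1, G u = p * ∫ s in Ioo 0 1, s ^ (-p - 1) * G (s ^ (-p)) := by
  have himage : (fun s : ℝ => s ^ (-p)) '' Ioo 0 1 = Ioi 1 := by
    ext u
    constructor
    · rintro ⟨s, ⟨hs0, hs1⟩, rfl⟩
      exact one_lt_rpow_of_pos_of_lt_one_of_neg hs0 hs1 (neg_neg_of_pos hp)
    · intro hu
      have hu0 : 0 < u := one_pos.trans hu
      refine ⟨u ^ (-p⁻¹), ⟨rpow_pos_of_pos hu0 _,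
        rpow_lt_one_of_one_lt_of_neg hu (neg_neg_of_pos (inv_pos.2 hp))⟩, ?_⟩
      dsimp only
      rw [← rpow_mul hu0.le, neg_mul_neg, inv_mul_cancel₀ hp.ne', rpow_one]
  have hderiv : ∀ s ∈ Ioo (0 : ℝ) 1,
      HasDerivWithinAt (fun s : ℝ => s ^ (-p)) (-p * s ^ (-p - 1)) (Ioo 0 1) s :=
    fun s hs => (hasDerivAt_rpow_const (Or.inl hs.1.ne')).hasDerivWithinAt
  have hinj : InjOn (fun s : ℝ => s ^ (-p)) (Ioo 0 1) :=
    (strictAntiOn_rpow_Ioi_of_exponent_neg (neg_neg_of_pos hp)).injOn.mono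
      fun s hs => hs.1
  rw [← himage, integral_image_eq_integral_abs_deriv_smul measurableSet_Ioo hderiv hinj,
    ← integral_const_mul]
  refine setIntegral_congr_fun measurableSet_Ioo fun s hs => ?_
  rw [smul_eq_mul, abs_mul, abs_neg, abs_of_pos hp, abs_of_pos (rpow_pos_of_pos hs.1 _),
    mul_assoc]

theorem hyp2F1_one_self_add_one {b : ℝ} (hb : 0 < b) (z : ℝ) :
    hyp2F1 1 b (b + 1) z = b * ∫ t in Ioo 0 1, t ^ (b - 1) * (1 - z * t)⁻¹ := by
  simp only [hyp2F1, add_sub_cancel_left, sub_self, rpow_zero, mul_one, rpow_neg_one,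
    Gamma_one, Gamma_add_one hb.ne']
  rw [mul_div_cancel_right₀ b (Gamma_pos_of_pos hb).ne']

theorem psi_eq_integral {α : ℝ} (hα : 2 < α) (z : ℝ) :
    psi α z = 2 * z / α * ∫ s in Ioo 0 1, s ^ (-(2 / α)) * (1 + z * s)⁻¹ := by
  have hb : 0 < 1 - 2 / α := sub_pos.2 ((div_lt_one (by linarith)).2 hα)
  rw [psi, show 2 - 2 / α = 1 - 2 / α + 1 by ring, hyp2F1_one_self_add_one hb]
  simp only [sub_sub_cancel_left, neg_mul, sub_neg_eq_add]
  have : α - 2 ≠ 0 := by linarith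
  field_simp

theorem coverage_inner_integral_general (α θ r h : ℝ)
    (hα : 2 < α) (hθ : 0 < θ) (hr : 0 < r) :
    (∫ t in Ioi r,
        (1 - 1 / (1 + θ * ((t ^ 2 + h ^ 2) / (r ^ 2 + h ^ 2)) ^ (-(α / 2)))) * t)
      = (1 / 2) * (r ^ 2 + h ^ 2) * psi α θ := by
  have hA : 0 < r ^ 2 + h ^ 2 := by positivity
  have hα0 : 0 < α := by linarith
  let G : ℝ → ℝ := fun u => 1 - 1 / (1 + θ * u ^ (-(α / 2)))
  have hG : ∀ s ∈ Ioo (0 : ℝ) 1,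
      s ^ (-(2 / α) - 1) * G (s ^ (-(2 / α))) = θ * (s ^ (-(2 / α)) * (1 + θ * s)⁻¹) := by
    intro s hs
    have hθs : 1 + θ * s ≠ 0 := by nlinarith [hs.1]
    have hs0 : s ≠ 0 := hs.1.ne'
    have hinv : (s ^ (-(2 / α))) ^ (-(α / 2)) = s := by
      rw [← rpow_mul hs.1.le, neg_mul_neg, div_mul_div_cancel₀ hα0.ne', div_self two_ne_zero,
        rpow_one]
    simp only [G, hinv, rpow_sub_one hs0]
    rw [one_sub_div hθs, add_sub_cancel_left]
    field_simp
  calc _ = (r ^ 2 + h ^ 2) / 2 * ∫ u in Ioi 1, G u := by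
        have hsub := integral_Ioi_comp_sq_add_div_mul_self G (c := h ^ 2) hr.le hA
        rwa [div_self hA.ne'] at hsub
    _ = (r ^ 2 + h ^ 2) / 2 * (2 / α *
          ∫ s in Ioo 0 1, θ * (s ^ (-(2 / α)) * (1 + θ * s)⁻¹)) := by
        rw [integral_Ioi_one_eq_integral_Ioo_rpow_neg G (p := 2 / α) (by positivity),
          setIntegral_congr_fun measurableSet_Ioo hG]
    _ = (1 / 2) * (r ^ 2 + h ^ 2) * psi α θ := by
        rw [integral_const_mul, psi_eq_integral hα]
        ring

theorem coverage_inner_integral (α θ r h : ℝ)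
    (hα : 2 < α) (hθ : 0 < θ) (hr : 0 < r) (hh : 0 ≤ h) :
    (∫ t in Ioi r,
        (1 - 1 / (1 + θ * ((t ^ 2 + h ^ 2) / (r ^ 2 + h ^ 2)) ^ (-(α / 2)))) * t)
      = (1 / 2) * (r ^ 2 + h ^ 2) * psi α θ :=
  coverage_inner_integral_general α θ r h hα hθ hr
end

section
/- For α > 2, θ > 0, λ > 0, and h ≥ 0, the coverage probability for closest BS association with elevated base stations satisfies P_cov^C(θ,λ) = 2πλ·∫_0^∞ exp(-πλ·ψ(θ)·(r² + h²))·e^(-πλr²)·r dr = (1/(ψ(θ)+1))·exp(-πλh²·ψ(θ)), where ψ(z) = (2z/(α-2))·₂F₁(1, 1 - 2/α, 2 - 2/α, -z). -/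
open Real MeasureTheory Set

/-! The exponent is quadratic in `r`, so the factor `exp (-πλh²ψ)` comes out of the integral and
what remains is the Gaussian moment `∫₀^∞ r e^{-cr²} dr = 1/(2c)` with `c = πλ(ψ + 1)`. This needs
`ψ > -1`, and indeed `ψ(θ) ≥ 0`: Euler's integrand for `₂F₁(1, 1 - 2/α; 2 - 2/α; -θ)` is
nonnegative. -/

lemma integral_mul_exp_neg_mul_sq_Ioi {c : ℝ} (hc : 0 < c) :
    ∫ r in Ioi (0 : ℝ), r * exp (-c * r ^ 2) = (2 * c)⁻¹ := by
  have h := integral_mul_cexp_neg_mul_sq (b := (c : ℂ)) (by simpa using hc)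
  rw [← Complex.ofReal_inj]
  push_cast
  rw [← h, ← integral_complex_ofReal]
  push_cast
  rfl

lemma hyp2F1_nonneg (a : ℝ) {b c z : ℝ} (hb : 0 < b) (hcb : 0 < c - b) (hz : z ≤ 1) :
    0 ≤ hyp2F1 a b c z := by
  refine mul_nonneg (div_nonneg (Gamma_pos_of_pos (by linarith)).le
    (mul_pos (Gamma_pos_of_pos hb) (Gamma_pos_of_pos hcb)).le) ?_
  refine setIntegral_nonneg measurableSet_Ioo fun t ht => ?_
  have hzt : 0 ≤ 1 - z * t := by nlinarith [ht.1, ht.2]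
  have ht0 : 0 ≤ t := ht.1.le
  have ht1 : 0 ≤ 1 - t := by linarith [ht.2]
  positivity

lemma psi_nonneg {α θ : ℝ} (hα : 2 < α) (hθ : 0 ≤ θ) : 0 ≤ psi α θ := by
  have h2α : 2 / α < 1 := (div_lt_one (by linarith)).2 hα
  exact mul_nonneg (div_nonneg (by linarith) (by linarith))
    (hyp2F1_nonneg 1 (by linarith) (by linarith) (by linarith))

theorem coverage_closest_elevated_general (α θ lam h : ℝ)
    (hα : 2 < α) (hθ : 0 < θ) (hlam : 0 < lam) :
    2 * π * lam *
      ∫ r in Ioi (0 : ℝ),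
        Real.exp (-(π * lam * psi α θ * (r ^ 2 + h ^ 2))) * Real.exp (-(π * lam * r ^ 2)) * r
      = (1 / (psi α θ + 1)) * Real.exp (-(π * lam * h ^ 2 * psi α θ)) := by
  have hψ : 0 ≤ psi α θ := psi_nonneg hα hθ.le
  have hc : 0 < π * lam * (psi α θ + 1) := by positivity
  calc _ = 2 * π * lam * (Real.exp (-(π * lam * h ^ 2 * psi α θ)) *
        ∫ r in Ioi (0 : ℝ), r * Real.exp (-(π * lam * (psi α θ + 1)) * r ^ 2)) := by
        congr 1
        rw [← integral_const_mul]
        congr 1 with r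
        rw [mul_left_comm, ← Real.exp_add, mul_comm _ r, ← Real.exp_add]
        ring_nf
    _ = _ := by
        rw [integral_mul_exp_neg_mul_sq_Ioi hc]
        field_simp

theorem coverage_closest_elevated (α θ lam h : ℝ)
    (hα : 2 < α) (hθ : 0 < θ) (hlam : 0 < lam) (hh : 0 ≤ h) :
    2 * π * lam *
      ∫ r in Ioi (0 : ℝ),
        Real.exp (-(π * lam * psi α θ * (r ^ 2 + h ^ 2))) * Real.exp (-(π * lam * r ^ 2)) * r
      = (1 / (psi α θ + 1)) * Real.exp (-(π * lam * h ^ 2 * psi α θ)) :=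
  coverage_closest_elevated_general α θ lam h hα hθ hlam
end

section
/- Define P_cov^C(θ,λ,h) = (1/(ψ(θ)+1))·exp(-πλh²·ψ(θ)) with ψ(θ) > 0. The maximal ASE, max_λ λ·P_cov^C(θ,λ,h)·log₂(1+θ), equals (log₂(1+θ))/(e·πh²·ψ(θ)·(ψ(θ)+1)), and in particular is proportional to 1/h². -/
/-! The map `x ↦ x e^{-c x}` is maximised at `x = 1/c` with value `1/(e c)`, by `y ≤ e^{y-1}`
applied to `y = c x`. The ASE is this map with `c = π h² ψ(θ)`, scaled by the nonnegative
constant `log₂(1+θ)/(ψ(θ)+1)`. -/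

open Real

theorem mul_exp_neg_mul_le {c : ℝ} (hc : 0 < c) (x : ℝ) :
    x * exp (-(c * x)) ≤ (exp 1 * c)⁻¹ :=
  calc x * exp (-(c * x)) = c * x * exp (-(c * x)) / c := by field_simp
    _ ≤ exp (-1) / c := by gcongr; exact mul_exp_neg_le_exp_neg_one _
    _ = (exp 1 * c)⁻¹ := by rw [exp_neg, mul_inv, div_eq_mul_inv]

theorem inv_mul_exp_neg_mul_inv {c : ℝ} (hc : c ≠ 0) :
    c⁻¹ * exp (-(c * c⁻¹)) = (exp 1 * c)⁻¹ := by
  rw [mul_inv_cancel₀ hc, exp_neg, mul_inv, mul_comm]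

theorem max_ase_value (θ h ψθ : ℝ) (hθ : 0 < θ) (hh : 0 < h) (hψ : 0 < ψθ) :
    let Pcov : ℝ → ℝ := fun lam => (1 / (ψθ + 1)) * Real.exp (-(π * lam * h ^ 2 * ψθ))
    let ASE : ℝ → ℝ := fun lam => lam * Pcov lam * Real.logb 2 (1 + θ)
    let lamOpt : ℝ := 1 / (π * h ^ 2 * ψθ)
    ASE lamOpt = Real.logb 2 (1 + θ) / (Real.exp 1 * π * h ^ 2 * ψθ * (ψθ + 1)) ∧
      ∀ lam : ℝ, 0 < lam → ASE lam ≤ Real.logb 2 (1 + θ) / (Real.exp 1 * π * h ^ 2 * ψθ * (ψθ + 1)) := by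
  intro Pcov ASE lamOpt
  set c := π * h ^ 2 * ψθ
  set K := Real.logb 2 (1 + θ) / (ψθ + 1)
  have hc : 0 < c := by positivity
  have hK : 0 ≤ K := div_nonneg (logb_nonneg one_lt_two (by linarith)) (by linarith)
  have hASE (lam : ℝ) : ASE lam = lam * exp (-(c * lam)) * K := by
    simp only [ASE, Pcov, K, c]; ring_nf
  have hmax : Real.logb 2 (1 + θ) / (exp 1 * π * h ^ 2 * ψθ * (ψθ + 1)) = (exp 1 * c)⁻¹ * K := by
    simp only [K, c]; field_simp
  rw [hmax]
  refine ⟨?_, fun lam _ => ?_⟩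
  · rw [hASE, show lamOpt = c⁻¹ from one_div c, inv_mul_exp_neg_mul_inv hc.ne']
  · rw [hASE]
    exact mul_le_mul_of_nonneg_right (mul_exp_neg_mul_le hc lam) hK
end

section
/- For α > 2 and z > 0, ψ(z) = (2z/(α-2))·₂F₁(1, 1 - 2/α, 2 - 2/α, -z) is strictly positive and strictly increasing in z, and satisfies ψ(z) = 2·∫_1^∞ (z·u^(-α)/(1 + z·u^(-α)))·u du. -/
open Real MeasureTheory Set

lemma setIntegral_pos_aux {f : ℝ → ℝ} (hfi : IntegrableOn f (Ioo (0:ℝ) 1))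
    (hf : ∀ t ∈ Ioo (0:ℝ) 1, 0 < f t) : 0 < ∫ t in Ioo (0:ℝ) 1, f t := by
  refine (setIntegral_pos_iff_support_of_nonneg_ae ?_ hfi).2 ?_
  · filter_upwards [ae_restrict_mem measurableSet_Ioo] with t ht using (hf t ht).le
  · refine lt_of_lt_of_le ?_ (measure_mono (fun t ht => ⟨(hf t ht).ne', ht⟩))
    simp [Real.volume_Ioo]

lemma integrableOn_aux {α z : ℝ} (hα : 2 < α) (hz : 0 < z) :
    IntegrableOn (fun t => t ^ (-(2/α)) * (1 + z*t)⁻¹) (Ioo (0:ℝ) 1) := by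
  have hα0 : (0:ℝ) < α := by linarith
  have hr : (-1:ℝ) < -(2/α) := by
    have : 2/α < 1 := (div_lt_one hα0).2 (by linarith)
    linarith
  have h1 : IntegrableOn (fun t : ℝ => t ^ (-(2/α))) (Ioo (0:ℝ) 1) := by
    have := intervalIntegral.intervalIntegrable_rpow' (a := (0:ℝ)) (b := 1) hr
    exact ((intervalIntegrable_iff_integrableOn_Ioc_of_le (by norm_num)).1 this).mono_set
      Ioo_subset_Ioc_self
  refine Integrable.mono h1 ?_ ?_
  · apply ContinuousOn.aestronglyMeasurable ?_ measurableSet_Ioo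
    apply ContinuousOn.mul
    · exact fun t ht => (Real.continuousAt_rpow_const t _ (Or.inl ht.1.ne')).continuousWithinAt
    · apply ContinuousOn.inv₀ (by fun_prop)
      intro t ht
      have : 0 < z * t := mul_pos hz ht.1
      positivity
  · rw [ae_restrict_iff' measurableSet_Ioo]
    refine Filter.Eventually.of_forall fun t ht => ?_
    have h1t : (0:ℝ) < 1 + z * t := by have := mul_pos hz ht.1; linarith
    have hrp : (0:ℝ) ≤ t ^ (-(2/α)) := Real.rpow_nonneg ht.1.le _
    rw [Real.norm_eq_abs, Real.norm_eq_abs, abs_of_nonneg hrp,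
      abs_of_nonneg (mul_nonneg hrp (inv_nonneg.2 h1t.le))]
    have : (1 + z*t)⁻¹ ≤ 1 := by
      rw [inv_le_one_iff₀]; right; have := mul_pos hz ht.1; linarith
    calc t ^ (-(2/α)) * (1 + z*t)⁻¹ ≤ t ^ (-(2/α)) * 1 := by
          exact mul_le_mul_of_nonneg_left this hrp
      _ = t ^ (-(2/α)) := mul_one _

lemma psi_eq {α z : ℝ} (hα : 2 < α) (hz : 0 < z) :
    psi α z = (2*z/α) * ∫ t in Ioo (0:ℝ) 1, t ^ (-(2/α)) * (1 + z*t)⁻¹ := by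
  have hα0 : (0:ℝ) < α := by linarith
  have hb : (0:ℝ) < 1 - 2/α := by
    have : 2/α < 1 := (div_lt_one hα0).2 (by linarith)
    linarith
  have hGpos : 0 < Real.Gamma (1 - 2/α) := Real.Gamma_pos_of_pos hb
  have hG2 : Real.Gamma (2 - 2/α) = (1 - 2/α) * Real.Gamma (1 - 2/α) := by
    have h : (2:ℝ) - 2/α = (1 - 2/α) + 1 := by ring
    rw [h, Real.Gamma_add_one hb.ne']
  have hcb : (2 - 2/α) - (1 - 2/α) = (1:ℝ) := by ring
  have hint : (∫ t in Ioo (0:ℝ) 1, t ^ ((1 - 2/α) - 1) * (1 - t) ^ ((2 - 2/α) - (1 - 2/α) - 1)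
      * (1 - (-z) * t) ^ (-(1:ℝ))) = ∫ t in Ioo (0:ℝ) 1, t ^ (-(2/α)) * (1 + z*t)⁻¹ := by
    refine setIntegral_congr_fun measurableSet_Ioo fun t ht => ?_
    have e1 : (1 - 2/α) - 1 = -(2/α) := by ring
    have e2 : (2 - 2/α) - (1 - 2/α) - 1 = (0:ℝ) := by ring
    have e3 : 1 - (-z) * t = 1 + z * t := by ring
    rw [e1, e2, e3, Real.rpow_zero, mul_one, Real.rpow_neg_one]
  unfold psi hyp2F1
  rw [hint, hcb, Real.Gamma_one, hG2]
  have h1 : (1 - 2/α) * Real.Gamma (1 - 2/α) / (Real.Gamma (1 - 2/α) * 1) = 1 - 2/α := by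
    rw [mul_one, mul_div_assoc, div_self hGpos.ne', mul_one]
  have h2 : 2 * z / (α - 2) * (1 - 2/α) = 2*z/α := by
    have hne : α - 2 ≠ 0 := by linarith
    field_simp
  rw [h1, ← mul_assoc, h2]

lemma subst_aux {α z : ℝ} (hα : 2 < α) (hz : 0 < z) :
    (∫ u in Ioi (1:ℝ), (z * u ^ (-α) / (1 + z * u ^ (-α))) * u)
      = (z/α) * ∫ t in Ioo (0:ℝ) 1, t ^ (-(2/α)) * (1 + z*t)⁻¹ := by
  have hα0 : (0:ℝ) < α := by linarith
  have himg : (fun u : ℝ => u ^ (-α)) '' (Ioi 1) = Ioo (0:ℝ) 1 := by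
    ext t
    constructor
    · rintro ⟨u, hu, rfl⟩
      have hu1 : (1:ℝ) < u := hu
      exact ⟨Real.rpow_pos_of_pos (by linarith) _,
        Real.rpow_lt_one_of_one_lt_of_neg hu1 (by linarith)⟩
    · rintro ⟨ht0, ht1⟩
      refine ⟨t ^ (-(1/α)), ?_, ?_⟩
      · exact (Real.one_lt_rpow_iff_of_pos ht0).2
          (Or.inr ⟨ht1, neg_lt_zero.2 (by positivity)⟩)
      · show (t ^ (-(1/α))) ^ (-α) = t
        rw [← Real.rpow_mul ht0.le]
        have h : -(1/α) * (-α) = 1 := by field_simp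
        rw [h, Real.rpow_one]
  have hderiv : ∀ u ∈ Ioi (1:ℝ), HasDerivWithinAt (fun u : ℝ => u ^ (-α))
      (-α * u ^ (-α - 1)) (Ioi 1) u := fun u hu =>
    (Real.hasDerivAt_rpow_const (Or.inl (ne_of_gt (lt_trans one_pos hu)))).hasDerivWithinAt
  have hinj : InjOn (fun u : ℝ => u ^ (-α)) (Ioi 1) := by
    intro x hx y hy hxy
    have hx0 : (0:ℝ) < x := lt_trans one_pos hx
    have hy0 : (0:ℝ) < y := lt_trans one_pos hy
    have h : -(1/α) * (-α) = 1 := by field_simp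
    have hxy' : x ^ (-α) = y ^ (-α) := hxy
    have : (x ^ (-α)) ^ (-(1/α)) = (y ^ (-α)) ^ (-(1/α)) := by rw [hxy']
    rwa [← Real.rpow_mul hx0.le, ← Real.rpow_mul hy0.le, mul_comm, h,
      Real.rpow_one, Real.rpow_one] at this
  have key := integral_image_eq_integral_abs_deriv_smul measurableSet_Ioi hderiv hinj
    (fun t => t ^ (-(2/α)) * (1 + z*t)⁻¹)
  rw [himg] at key
  rw [key, ← integral_const_mul]
  refine setIntegral_congr_fun measurableSet_Ioi fun u hu => ?_
  have hu1 : (1:ℝ) < u := hu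
  have hu0 : (0:ℝ) < u := lt_trans one_pos hu1
  have hden : (0:ℝ) < 1 + z * u ^ (-α) := by
    have := mul_pos hz (Real.rpow_pos_of_pos hu0 (-α)); linarith
  have e0 : |(-α) * u ^ (-α - 1)| = α * u ^ (-α - 1) := by
    rw [abs_mul, abs_neg, abs_of_pos hα0, abs_of_pos (Real.rpow_pos_of_pos hu0 _)]
  have e1 : (u ^ (-α)) ^ (-(2/α)) = u ^ (2:ℝ) := by
    rw [← Real.rpow_mul hu0.le]
    congr 1
    field_simp
  have e2 : u ^ (-α - 1) * u ^ (2:ℝ) = u ^ (1 - α) := by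
    rw [← Real.rpow_add hu0, show -α - 1 + 2 = 1 - α from by ring]
  have e3 : u ^ (-α) * u = u ^ (1 - α) := by
    rw [show (1:ℝ) - α = -α + 1 from by ring, Real.rpow_add_one hu0.ne']
  rw [smul_eq_mul, e0, e1]
  have hR : z / α * (α * u ^ (-α - 1) * (u ^ (2:ℝ) * (1 + z * u ^ (-α))⁻¹))
      = z * (u ^ (-α - 1) * u ^ (2:ℝ)) * (1 + z * u ^ (-α))⁻¹ := by
    field_simp
  rw [hR, e2, div_eq_mul_inv, ← e3]
  ring

theorem psi_properties (α : ℝ) (hα : 2 < α) :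
    (∀ z : ℝ, 0 < z → 0 < psi α z) ∧
      StrictMonoOn (psi α) (Ioi 0) ∧
      ∀ z : ℝ, 0 < z →
        psi α z = 2 * ∫ u in Ioi (1 : ℝ), (z * u ^ (-α) / (1 + z * u ^ (-α))) * u := by
  have hα0 : (0:ℝ) < α := by linarith
  have Ipos : ∀ z : ℝ, 0 < z → 0 < ∫ t in Ioo (0:ℝ) 1, t ^ (-(2/α)) * (1 + z*t)⁻¹ := by
    intro z hz
    refine setIntegral_pos_aux (integrableOn_aux hα hz) fun t ht => ?_
    have : (0:ℝ) < 1 + z * t := by nlinarith [mul_pos hz ht.1]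
    exact mul_pos (Real.rpow_pos_of_pos ht.1 _) (inv_pos.2 this)
  have hfint : ∀ z : ℝ, 0 < z →
      IntegrableOn (fun t => t ^ (-(2/α)) * (z * (1 + z*t)⁻¹)) (Ioo (0:ℝ) 1) := by
    intro z hz
    exact ((integrableOn_aux hα hz).const_mul z).congr
      (Filter.Eventually.of_forall fun t => by ring)
  have hJrw : ∀ z : ℝ, 0 < z →
      psi α z = (2/α) * ∫ t in Ioo (0:ℝ) 1, t ^ (-(2/α)) * (z * (1 + z*t)⁻¹) := by
    intro z hz
    rw [psi_eq hα hz]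
    have h : (∫ t in Ioo (0:ℝ) 1, t ^ (-(2/α)) * (z * (1 + z*t)⁻¹))
        = z * ∫ t in Ioo (0:ℝ) 1, t ^ (-(2/α)) * (1 + z*t)⁻¹ := by
      rw [← integral_const_mul]
      exact setIntegral_congr_fun measurableSet_Ioo fun t _ => by ring
    rw [h]
    ring
  refine ⟨?_, ?_, ?_⟩
  · intro z hz
    rw [psi_eq hα hz]
    have := Ipos z hz
    have h2z : (0:ℝ) < 2 * z / α := by positivity
    exact mul_pos h2z this
  · intro z1 hz1 z2 hz2 hlt
    simp only [mem_Ioi] at hz1 hz2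
    rw [hJrw z1 hz1, hJrw z2 hz2]
    have h2α : (0:ℝ) < 2/α := by positivity
    refine mul_lt_mul_of_pos_left ?_ h2α
    rw [← sub_pos, ← integral_sub (hfint z2 hz2) (hfint z1 hz1)]
    refine setIntegral_pos_aux ((hfint z2 hz2).sub (hfint z1 hz1)) fun t ht => ?_
    have hd1 : (0:ℝ) < 1 + z1 * t := by nlinarith [mul_pos hz1 ht.1]
    have hd2 : (0:ℝ) < 1 + z2 * t := by nlinarith [mul_pos hz2 ht.1]
    have hinner : z1 * (1 + z1*t)⁻¹ < z2 * (1 + z2*t)⁻¹ := by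
      rw [← div_eq_mul_inv, ← div_eq_mul_inv, div_lt_div_iff₀ hd1 hd2]
      nlinarith
    have hrp : (0:ℝ) < t ^ (-(2/α)) := Real.rpow_pos_of_pos ht.1 _
    have : t ^ (-(2/α)) * (z2 * (1 + z2*t)⁻¹) - t ^ (-(2/α)) * (z1 * (1 + z1*t)⁻¹)
        = t ^ (-(2/α)) * (z2 * (1 + z2*t)⁻¹ - z1 * (1 + z1*t)⁻¹) := by ring
    rw [this]
    exact mul_pos hrp (sub_pos.2 hinner)
  · intro z hz
    rw [psi_eq hα hz, subst_aux hα hz]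
    ring
end

section
/- For α > 2, θ > 0, h > 0, and λ > 0, the function F(λ) = λ·exp(-πλh²·ψ(θ)) satisfies F(λ) ≤ 1/(e·πh²·ψ(θ)) for all λ > 0 with equality iff λ = 1/(πh²ψ(θ)), and lim_{λ→∞} F(λ) = 0; hence the ASE λ·P_cov^C(θ,λ)·log₂(1+θ) decays to zero as the BS density grows large. -/
/-! With `c = π h² ψ(θ)`, the substitution `y = c λ` turns `F` into `(y e^{-y}) / c`. Since
`y ≤ e^{y-1}`, with equality only at `y = 1`, the function `y e^{-y}` has strict maximum `e⁻¹`
at `y = 1`; and it tends to `0` as `y → ∞` because the exponential beats any power. -/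

open Real Filter Topology

namespace Real

theorem mul_exp_neg_lt_exp_neg_one {y : ℝ} (hy : y ≠ 1) : y * exp (-y) < exp (-1) := by
  have hlt : y < exp (y - 1) := by simpa using add_one_lt_exp (sub_ne_zero.mpr hy)
  calc y * exp (-y) < exp (y - 1) * exp (-y) := by gcongr
    _ = exp (-1) := by rw [← exp_add]; ring_nf

theorem mul_exp_neg_eq_exp_neg_one_iff {y : ℝ} : y * exp (-y) = exp (-1) ↔ y = 1 := by
  refine ⟨fun h => ?_, fun h => by rw [h, one_mul]⟩
  by_contra hy
  exact (mul_exp_neg_lt_exp_neg_one hy).ne h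

theorem mul_exp_neg_mul_eq {c : ℝ} (hc : c ≠ 0) (x : ℝ) :
    x * exp (-(c * x)) = c * x * exp (-(c * x)) / c := by
  field_simp

theorem mul_exp_neg_mul_le {c : ℝ} (hc : 0 < c) (x : ℝ) :
    x * exp (-(c * x)) ≤ 1 / (exp 1 * c) := by
  rw [mul_exp_neg_mul_eq hc.ne', one_div, mul_inv, ← exp_neg, ← div_eq_mul_inv]
  gcongr
  exact mul_exp_neg_le_exp_neg_one _

theorem mul_exp_neg_mul_eq_iff {c : ℝ} (hc : 0 < c) (x : ℝ) :
    x * exp (-(c * x)) = 1 / (exp 1 * c) ↔ x = 1 / c := by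
  rw [mul_exp_neg_mul_eq hc.ne', one_div, mul_inv, ← exp_neg, ← div_eq_mul_inv,
    div_left_inj' hc.ne', mul_exp_neg_eq_exp_neg_one_iff, eq_div_iff hc.ne', mul_comm]

theorem tendsto_mul_exp_neg_mul_atTop {c : ℝ} (hc : 0 < c) :
    Tendsto (fun x => x * exp (-(c * x))) atTop (𝓝 0) := by
  simpa using tendsto_rpow_mul_exp_neg_mul_atTop_nhds_zero 1 c hc

end Real

theorem ase_decays_to_zero_general (h ψθ : ℝ) (hh : 0 < h)
    (hψ : 0 < ψθ) :
    let F : ℝ → ℝ := fun lam => lam * Real.exp (-(π * lam * h ^ 2 * ψθ))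
    (∀ lam : ℝ, 0 < lam →
        (F lam ≤ 1 / (Real.exp 1 * π * h ^ 2 * ψθ) ∧
          (F lam = 1 / (Real.exp 1 * π * h ^ 2 * ψθ) ↔ lam = 1 / (π * h ^ 2 * ψθ)))) ∧
      Tendsto F atTop (nhds 0) := by
  intro F
  have hc : 0 < π * h ^ 2 * ψθ := by positivity
  have hF : F = fun lam => lam * exp (-(π * h ^ 2 * ψθ * lam)) := by
    funext lam
    simp only [F]
    ring_nf
  have hmax : 1 / (exp 1 * π * h ^ 2 * ψθ) = 1 / (exp 1 * (π * h ^ 2 * ψθ)) := by ring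
  rw [hF, hmax]
  exact ⟨fun lam _ => ⟨mul_exp_neg_mul_le hc lam, mul_exp_neg_mul_eq_iff hc lam⟩,
    tendsto_mul_exp_neg_mul_atTop hc⟩

theorem ase_decays_to_zero (α θ h ψθ : ℝ) (hα : 2 < α) (hθ : 0 < θ) (hh : 0 < h)
    (hψ : 0 < ψθ) :
    let F : ℝ → ℝ := fun lam => lam * Real.exp (-(π * lam * h ^ 2 * ψθ))
    (∀ lam : ℝ, 0 < lam →
        (F lam ≤ 1 / (Real.exp 1 * π * h ^ 2 * ψθ) ∧
          (F lam = 1 / (Real.exp 1 * π * h ^ 2 * ψθ) ↔ lam = 1 / (π * h ^ 2 * ψθ)))) ∧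
      Tendsto F atTop (nhds 0) :=
  ase_decays_to_zero_general h ψθ hh hψ
end

section
/- For α > 2, s > 0, and h > 0, ∫_0^h (1 - 1/(1 + s·t^(-α)))·t dt is positive and finite, and equals (h²/2) - ∫_0^h (t^(α+1)/(t^α + s)) dt; consequently the strongest-association Laplace transform with height h, L_I^S(s) = L_{I,0}^S(s)·exp(2πλ·∫_0^h (1 - 1/(1 + s·t^(-α)))·t dt), satisfies L_I^S(s) > L_{I,0}^S(s). -/
/-!
For `t > 0` the integrand equals `s t / (t^α + s)`, which lies in `(0, t]`. Hence it is integrable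
on `(0, h]` with positive integral, and the height correction factor `exp (2πλ ∫₀ʰ …)` exceeds `1`.
-/

open Real MeasureTheory Set intervalIntegral

noncomputable def interferenceIntegrand (α s t : ℝ) : ℝ := (1 - 1 / (1 + s * t ^ (-α))) * t

section

variable {α s t : ℝ}

lemma interferenceIntegrand_eq_sub (hs : 0 ≤ s) (ht : 0 < t) :
    interferenceIntegrand α s t = t - t ^ (α + 1) / (t ^ α + s) := by
  have hpow : 0 < t ^ α := rpow_pos_of_pos ht α
  have hden : 0 < 1 + s * (t ^ α)⁻¹ := by positivity
  rw [interferenceIntegrand, rpow_neg ht.le, rpow_add ht, rpow_one]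
  field_simp

lemma interferenceIntegrand_pos (hs : 0 < s) (ht : 0 < t) : 0 < interferenceIntegrand α s t := by
  have hst : 0 < s * t ^ (-α) := by positivity
  have hlt : 1 / (1 + s * t ^ (-α)) < 1 := by rw [div_lt_one (by linarith)]; linarith
  exact mul_pos (by linarith) ht

lemma interferenceIntegrand_le_self (hs : 0 ≤ s) (ht : 0 < t) : interferenceIntegrand α s t ≤ t := by
  have hinv : 0 < 1 / (1 + s * t ^ (-α)) := by positivity
  unfold interferenceIntegrand
  nlinarith

lemma measurable_interferenceIntegrand : Measurable (interferenceIntegrand α s) := by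
  unfold interferenceIntegrand
  fun_prop

lemma integrableOn_interferenceIntegrand (hs : 0 < s) (h : ℝ) :
    IntegrableOn (interferenceIntegrand α s) (Ioc 0 h) := by
  refine Integrable.mono' (integrableOn_const (C := h) measure_Ioc_lt_top.ne)
    measurable_interferenceIntegrand.aestronglyMeasurable ?_
  filter_upwards [ae_restrict_mem measurableSet_Ioc] with t ht
  rw [norm_eq_abs, abs_of_pos (interferenceIntegrand_pos hs ht.1)]
  exact (interferenceIntegrand_le_self hs.le ht.1).trans ht.2

lemma integral_interferenceIntegrand_pos (hs : 0 < s) {h : ℝ} (hh : 0 < h) :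
    0 < ∫ t in (0 : ℝ)..h, interferenceIntegrand α s t :=
  intervalIntegral_pos_of_pos_on
    ((intervalIntegrable_iff_integrableOn_Ioc_of_le hh.le).2
      (integrableOn_interferenceIntegrand hs h))
    (fun _ ht => interferenceIntegrand_pos hs ht.1) hh

lemma integral_interferenceIntegrand_eq (hs : 0 < s) {h : ℝ} (hh : 0 ≤ h) :
    ∫ t in (0 : ℝ)..h, interferenceIntegrand α s t
      = h ^ 2 / 2 - ∫ t in (0 : ℝ)..h, t ^ (α + 1) / (t ^ α + s) := by
  have hsub : ∫ t in (0 : ℝ)..h, t ^ (α + 1) / (t ^ α + s)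
      = ∫ t in (0 : ℝ)..h, (t - interferenceIntegrand α s t) := by
    -- the identity may fail at `t = 0`, where `0 ^ (α + 1)` is a junk value when `α = -1`
    rw [integral_of_le hh, integral_of_le hh]
    refine setIntegral_congr_fun measurableSet_Ioc fun t ht => ?_
    rw [interferenceIntegrand_eq_sub hs.le ht.1]
    ring
  rw [hsub, integral_sub intervalIntegrable_id
    ((intervalIntegrable_iff_integrableOn_Ioc_of_le hh).2
      (integrableOn_interferenceIntegrand hs h)), integral_id]
  ring

end

theorem strongest_laplace_height_correction_general (α s h lam : ℝ)
    (hs : 0 < s) (hh : 0 < h) (hlam : 0 < lam) :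
    (0 < ∫ t in (0 : ℝ)..h, (1 - 1 / (1 + s * t ^ (-α))) * t) ∧
      IntegrableOn (fun t : ℝ => (1 - 1 / (1 + s * t ^ (-α))) * t) (Ioc 0 h) ∧
      (∫ t in (0 : ℝ)..h, (1 - 1 / (1 + s * t ^ (-α))) * t)
        = h ^ 2 / 2 - ∫ t in (0 : ℝ)..h, t ^ (α + 1) / (t ^ α + s) ∧
      Real.exp (-(2 * π * lam * ∫ t in Ioi (0 : ℝ), (1 - 1 / (1 + s * t ^ (-α))) * t)) *
          Real.exp (2 * π * lam * ∫ t in (0 : ℝ)..h, (1 - 1 / (1 + s * t ^ (-α))) * t)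
        > Real.exp (-(2 * π * lam * ∫ t in Ioi (0 : ℝ), (1 - 1 / (1 + s * t ^ (-α))) * t)) := by
  have hpos : 0 < ∫ t in (0 : ℝ)..h, interferenceIntegrand α s t :=
    integral_interferenceIntegrand_pos hs hh
  refine ⟨hpos, integrableOn_interferenceIntegrand hs h,
    integral_interferenceIntegrand_eq hs hh.le, ?_⟩
  exact lt_mul_of_one_lt_right (exp_pos _) (one_lt_exp_iff.2 (by positivity))

theorem strongest_laplace_height_correction (α s h lam : ℝ)
    (hα : 2 < α) (hs : 0 < s) (hh : 0 < h) (hlam : 0 < lam) :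
    (0 < ∫ t in (0 : ℝ)..h, (1 - 1 / (1 + s * t ^ (-α))) * t) ∧
      IntegrableOn (fun t : ℝ => (1 - 1 / (1 + s * t ^ (-α))) * t) (Ioc 0 h) ∧
      (∫ t in (0 : ℝ)..h, (1 - 1 / (1 + s * t ^ (-α))) * t)
        = h ^ 2 / 2 - ∫ t in (0 : ℝ)..h, t ^ (α + 1) / (t ^ α + s) ∧
      Real.exp (-(2 * π * lam * ∫ t in Ioi (0 : ℝ), (1 - 1 / (1 + s * t ^ (-α))) * t)) *
          Real.exp (2 * π * lam * ∫ t in (0 : ℝ)..h, (1 - 1 / (1 + s * t ^ (-α))) * t)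
        > Real.exp (-(2 * π * lam * ∫ t in Ioi (0 : ℝ), (1 - 1 / (1 + s * t ^ (-α))) * t)) :=
  strongest_laplace_height_correction_general α s h lam hs hh hlam
end
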